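/- Let (y_n)_{n≥0} be a Markov chain with transition matrix P and initial distribution δ_i for a state i ∈ I, and assume that the spectral radius of the principal submatrix Q is strictly smaller than 1. Then the chain leaves I almost surely, i.e. ℙ(T < ∞) = 1, the expected escape time is finite, and it is given by 𝔼[T] = ((Id − Q)^{-1} 𝟙)_i. -/

import Mathlib

/-!
Started at `i`, the chain has `T > n` exactly when it stays in `I` at the times `1, …, n`.
Summing the finite-dimensional laws over the paths inside `I` gives `ℙ(T > n) = (Qⁿ 𝟙)_i`,
so `𝔼[T] = ∑ₙ ℙ(T > n) = ∑ₙ (Qⁿ 𝟙)_i`. By Gelfand's formula, `ρ(Q) < 1` makes `‖Qⁿ‖` decay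
geometrically, so the Neumann series `∑ₙ Qⁿ` converges to `(1 - Q)⁻¹`. Finally a random
variable with finite expectation is almost surely finite.
-/

open MeasureTheory Matrix Finset ENNReal

open Filter

theorem summable_pow_of_spectralRadius_lt_one {A : Type*} [NormedRing A] [NormedAlgebra ℂ A]
    [CompleteSpace A] {a : A} (ha : spectralRadius ℂ a < 1) : Summable (a ^ ·) := by
  obtain ⟨r, har, hr1⟩ := ENNReal.lt_iff_exists_nnreal_btwn.mp ha
  have hpow_le : ∀ᶠ n : ℕ in atTop, ‖a ^ n‖ ≤ (r : ℝ) ^ n := by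
    filter_upwards [(spectrum.pow_nnnorm_pow_one_div_tendsto_nhds_spectralRadius a)
      |>.eventually_lt_const har, eventually_ge_atTop 1] with n hn hn1
    have := ENNReal.rpow_lt_rpow hn (by positivity : (0 : ℝ) < n)
    rw [← ENNReal.rpow_mul, one_div, inv_mul_cancel₀ (by positivity), ENNReal.rpow_one,
      ENNReal.rpow_natCast, ← ENNReal.coe_pow, ENNReal.coe_lt_coe] at this
    exact_mod_cast this.le
  exact .of_norm_bounded_eventually_nat (summable_geometric_of_lt_one r.2 (by exact_mod_cast hr1))
    hpow_le

namespace Matrix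

variable {m : Type*} [Fintype m] [DecidableEq m]

theorem summable_pow_of_spectrum_lt_one [Nonempty m] {Q : Matrix m m ℝ}
    (hQ : ∀ z ∈ spectrum ℂ (Q.map (algebraMap ℝ ℂ)), ‖z‖ < 1) : Summable (Q ^ ·) := by
  -- Gelfand's formula needs some Banach algebra norm on the complexification; any one will do.
  let := Matrix.linftyOpNormedRing (n := m) (α := ℂ)
  let := Matrix.linftyOpNormedAlgebra (n := m) (R := ℂ) (α := ℂ)
  have : CompleteSpace (Matrix m m ℂ) := FiniteDimensional.complete ℂ _
  have hsum := summable_pow_of_spectralRadius_lt_one <| by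
    simpa using spectrum.spectralRadius_lt_of_forall_lt (Q.map (algebraMap ℝ ℂ)) (r := 1)
      fun z hz => by exact_mod_cast hQ z hz
  convert hsum.map Complex.reAddGroupHom.mapMatrix
    (continuous_id.matrix_map Complex.continuous_re) using 2 with n
  rw [Function.comp_apply, show Q.map Complex.ofReal = Complex.ofRealHom.mapMatrix Q from rfl,
    ← map_pow]
  ext
  simp

theorem hasSum_pow_of_spectrum_lt_one [Nonempty m] {Q : Matrix m m ℝ}
    (hQ : ∀ z ∈ spectrum ℂ (Q.map (algebraMap ℝ ℂ)), ‖z‖ < 1) : HasSum (Q ^ ·) (1 - Q)⁻¹ := by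
  have hsum := summable_pow_of_spectrum_lt_one hQ
  rw [inv_eq_right_inv hsum.one_sub_mul_tsum_pow]
  exact hsum.hasSum

theorem hasSum_pow_mulVec_of_spectrum_lt_one [Nonempty m] {Q : Matrix m m ℝ}
    (hQ : ∀ z ∈ spectrum ℂ (Q.map (algebraMap ℝ ℂ)), ‖z‖ < 1) (v : m → ℝ) :
    HasSum (fun n => Q ^ n *ᵥ v) ((1 - Q)⁻¹ *ᵥ v) :=
  (hasSum_pow_of_spectrum_lt_one hQ).map (mulVec.addMonoidHomLeft v)
    (continuous_id.matrix_mulVec continuous_const)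

end Matrix

section FinPath

variable {ι : Type*}

/-- The path `a, v 0, …, v (n - 1)`, extended to all times by staying at its endpoint. -/
def finPath (a : ι) {n : ℕ} (v : Fin n → ι) (k : ℕ) : ι :=
  (Fin.cons a v : Fin (n + 1) → ι) (Fin.clamp k n)

@[simp]
theorem finPath_zero (a : ι) {n : ℕ} (v : Fin n → ι) : finPath a v 0 = a := by
  simp [finPath, Fin.clamp]

theorem finPath_succ (a : ι) {n : ℕ} (v : Fin n → ι) {j : ℕ} (hj : j < n) :
    finPath a v (j + 1) = v ⟨j, hj⟩ := by
  have : Fin.clamp (j + 1) n = Fin.succ ⟨j, hj⟩ := Fin.ext (min_eq_left hj)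
  rw [finPath, this, Fin.cons_succ]

theorem finPath_cons_succ (a x : ι) {n : ℕ} (w : Fin n → ι) (k : ℕ) :
    finPath a (Fin.cons x w : Fin (n + 1) → ι) (k + 1) = finPath x w k := by
  have : Fin.clamp (k + 1) (n + 1) = (Fin.clamp k n).succ :=
    Fin.ext (Nat.add_min_add_right k n 1)
  rw [finPath, this, Fin.cons_succ, finPath]

theorem Matrix.sum_prod_finPath_eq_pow_mulVec_one [Fintype ι] [DecidableEq ι] {R : Type*}
    [CommSemiring R] (M : Matrix ι ι R) (n : ℕ) (a : ι) :
    ∑ v : Fin n → ι, ∏ k ∈ range n, M (finPath a v k) (finPath a v (k + 1)) =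
      (M ^ n *ᵥ 1) a := by
  induction n generalizing a with
  | zero => simp
  | succ n ih =>
    rw [← (Fin.consEquiv fun _ => ι).sum_comp, Fintype.sum_prod_type, pow_succ',
      ← mulVec_mulVec, mulVec, dotProduct]
    refine Finset.sum_congr rfl fun x _ => ?_
    simp only [Fin.consEquiv, Equiv.coe_fn_mk, prod_range_succ', finPath_cons_succ, finPath_zero,
      ← ih x]
    rw [← sum_mul, mul_comm]

theorem Matrix.pow_mulVec_one_nonneg [Fintype ι] [DecidableEq ι] {R : Type*} [CommSemiring R]
    [PartialOrder R] [IsOrderedRing R] {M : Matrix ι ι R} (hM : ∀ a b, 0 ≤ M a b) (n : ℕ)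
    (a : ι) : 0 ≤ (M ^ n *ᵥ 1) a := by
  rw [← sum_prod_finPath_eq_pow_mulVec_one]
  exact sum_nonneg fun v _ => prod_nonneg fun k _ => hM _ _

end FinPath

theorem ENat.natCast_lt_sInf_iff (p : ℕ → Prop) (n : ℕ) :
    (n : ℕ∞) < sInf {x : ℕ∞ | ∃ m : ℕ, x = m ∧ p m} ↔ ∀ m ≤ n, ¬ p m := by
  rw [← ENat.add_one_le_iff (ENat.natCast_ne_top n), le_sInf_iff]
  simp only [Set.mem_ofPred_eq, forall_exists_index, and_imp]
  rw [forall_comm]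
  simp only [forall_eq]
  refine forall_congr' fun m => ?_
  rw [← not_lt, imp_not_comm]
  norm_cast
  rw [Nat.lt_add_one_iff]

theorem toENNReal_eq_tsum_indicator_lt {Ω : Type*} (T : Ω → ℕ∞) (ω : Ω) :
    (T ω : ℝ≥0∞) = ∑' n : ℕ, {ω | (n : ℕ∞) < T ω}.indicator 1 ω := by
  simp only [Set.indicator_apply, Set.mem_ofPred_eq, Pi.one_apply]
  induction T ω using ENat.recTopCoe with
  | top => simp
  | coe m =>
    rw [tsum_eq_sum (s := range m) fun n hn => by simpa using hn]
    simp [filter_true_of_mem fun _ => mem_range.1]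

section Measure

variable {Ω : Type*} [MeasurableSpace Ω]

theorem measurable_toENNReal_of_measurableSet_lt {T : Ω → ℕ∞}
    (hT : ∀ n : ℕ, MeasurableSet {ω | (n : ℕ∞) < T ω}) : Measurable fun ω => (T ω : ℝ≥0∞) := by
  simp_rw [toENNReal_eq_tsum_indicator_lt T]
  exact .tsum fun n => measurable_one.indicator (hT n)

theorem lintegral_toENNReal_eq_tsum_measure_lt (μ : Measure Ω) {T : Ω → ℕ∞}
    (hT : ∀ n : ℕ, MeasurableSet {ω | (n : ℕ∞) < T ω}) :
    ∫⁻ ω, (T ω : ℝ≥0∞) ∂μ = ∑' n : ℕ, μ {ω | (n : ℕ∞) < T ω} := by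
  simp_rw [toENNReal_eq_tsum_indicator_lt T]
  rw [lintegral_tsum fun n => (measurable_one.indicator (hT n)).aemeasurable]
  exact tsum_congr fun n => lintegral_indicator_one (hT n)

variable {α : Type*} [MeasurableSpace α] [MeasurableSingletonClass α]

theorem measurableSet_stay {y : ℕ → Ω → α} (hy : ∀ n, Measurable (y n)) (I : Finset α)
    (n : ℕ) : MeasurableSet {ω | ∀ k ≤ n, 1 ≤ k → y k ω ∈ I} := by
  simp only [Set.ofPred_forall]
  exact .iInter fun k => .iInter fun _ => .iInter fun _ => hy k I.measurableSet

theorem measurableSet_cylinder {y : ℕ → Ω → α} (hy : ∀ n, Measurable (y n)) (w : ℕ → α)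
    (n : ℕ) : MeasurableSet {ω | ∀ k ≤ n, y k ω = w k} := by
  simp only [Set.ofPred_forall]
  exact .iInter fun k => .iInter fun _ => hy k (measurableSet_singleton _)

theorem measure_start_stay_eq_sum_cylinder (μ : Measure Ω) {y : ℕ → Ω → α}
    (hy : ∀ n, Measurable (y n)) {I : Finset α} (a : I) (n : ℕ) :
    μ {ω | y 0 ω = a ∧ ∀ k ≤ n, 1 ≤ k → y k ω ∈ I} =
      ∑ v : Fin n → I, μ {ω | ∀ k ≤ n, y k ω = finPath a v k} := by
  have hunion : {ω | y 0 ω = a ∧ ∀ k ≤ n, 1 ≤ k → y k ω ∈ I} =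
      ⋃ v : Fin n → I, {ω | ∀ k ≤ n, y k ω = finPath a v k} := by
    ext ω
    simp only [Set.mem_ofPred_eq, Set.mem_iUnion]
    constructor
    · rintro ⟨h0, hI⟩
      refine ⟨fun j => ⟨y (j + 1) ω, hI _ j.2 le_add_self⟩, fun k hk => ?_⟩
      cases k with
      | zero => simp [h0]
      | succ j => rw [finPath_succ a _ hk]
    · rintro ⟨v, hv⟩
      exact ⟨by simpa using hv 0 n.zero_le, fun k hk _ => hv k hk ▸ (finPath a v k).2⟩
  have hdisj : Pairwise (Function.onFun Disjoint fun v : Fin n → I =>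
      {ω | ∀ k ≤ n, y k ω = finPath a v k}) := by
    refine fun v v' hne => Set.disjoint_left.2 fun ω hv hv' =>
      hne (funext fun j => Subtype.ext ?_)
    have h := hv (j + 1) j.2
    have h' := hv' (j + 1) j.2
    rw [finPath_succ a _ j.2] at h h'
    exact h.symm.trans h'
  rw [hunion, measure_iUnion hdisj fun v => measurableSet_cylinder hy _ n, tsum_fintype]

end Measure

section MarkovChain

variable {Ω α : Type*} [MeasurableSpace Ω] [MeasurableSpace α] [MeasurableSingletonClass α]
  [DecidableEq α]

def HasMarkovLaw (μ : Measure Ω) (y : ℕ → Ω → α) (P : Matrix α α ℝ) (i : α) : Prop :=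
  ∀ (n : ℕ) (w : ℕ → α), μ {ω | ∀ k ≤ n, y k ω = w k} =
    ENNReal.ofReal ((if w 0 = i then (1 : ℝ) else 0) * ∏ k ∈ range n, P (w k) (w (k + 1)))

variable {μ : Measure Ω} {y : ℕ → Ω → α} {P : Matrix α α ℝ} {i : α}

theorem HasMarkovLaw.ae_start_eq [IsProbabilityMeasure μ] (h : HasMarkovLaw μ y P i)
    (hy : Measurable (y 0)) : ∀ᵐ ω ∂μ, y 0 ω = i := by
  have h0 : μ {ω | y 0 ω = i} = 1 := by simpa using h 0 fun _ => i
  rw [ae_iff_measure_eq (p := fun ω => y 0 ω = i)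
    (hy (measurableSet_singleton i)).nullMeasurableSet, h0, measure_univ]

theorem HasMarkovLaw.measure_stay_eq_pow_mulVec_one [IsProbabilityMeasure μ]
    (h : HasMarkovLaw μ y P i) (hy : ∀ n, Measurable (y n)) (hP : ∀ a b, 0 ≤ P a b)
    {I : Finset α} {Q : Matrix I I ℝ} (hQ : ∀ a b : I, Q a b = P a b) (hi : i ∈ I) (n : ℕ) :
    μ {ω | ∀ k ≤ n, 1 ≤ k → y k ω ∈ I} = ENNReal.ofReal ((Q ^ n *ᵥ 1) ⟨i, hi⟩) := by
  have hQnonneg (a b : I) : 0 ≤ Q a b := hQ a b ▸ hP a b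
  calc μ {ω | ∀ k ≤ n, 1 ≤ k → y k ω ∈ I}
      = μ {ω | y 0 ω = i ∧ ∀ k ≤ n, 1 ≤ k → y k ω ∈ I} :=
        measure_congr <| (h.ae_start_eq (hy 0)).mono fun _ h0 =>
          propext ⟨fun hs => ⟨h0, hs⟩, And.right⟩
    _ = ∑ v : Fin n → I, μ {ω | ∀ k ≤ n, y k ω = finPath ⟨i, hi⟩ v k} :=
        measure_start_stay_eq_sum_cylinder μ hy ⟨i, hi⟩ n
    _ = ∑ v : Fin n → I, ENNReal.ofReal (∏ k ∈ range n,
          Q (finPath ⟨i, hi⟩ v k) (finPath ⟨i, hi⟩ v (k + 1))) := by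
        simp [h _ _, hQ]
    _ = ENNReal.ofReal ((Q ^ n *ᵥ 1) ⟨i, hi⟩) := by
        rw [← ofReal_sum_of_nonneg fun v _ => prod_nonneg fun k _ => hQnonneg _ _,
          sum_prod_finPath_eq_pow_mulVec_one]

end MarkovChain

theorem markov_expected_escape_time_eq_inverse_general
    (N : ℕ)
    (P : Matrix (Fin N) (Fin N) ℝ)
    (hPnonneg : ∀ a b, 0 ≤ P a b)
    (I : Finset (Fin N))
    (Q : Matrix {x // x ∈ I} {x // x ∈ I} ℝ)
    (hQ : ∀ a b : {x // x ∈ I}, Q a b = P a b)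
    -- the spectral radius of `Q` is strictly smaller than 1
    (hspec : ∀ z : ℂ, z ∈ spectrum ℂ (Q.map (algebraMap ℝ ℂ)) → ‖z‖ < 1)
    (Ω : Type*) [MeasurableSpace Ω] (μ : Measure Ω) [IsProbabilityMeasure μ]
    (y : ℕ → Ω → Fin N) (hy : ∀ n, Measurable (y n))
    (i : Fin N) (hi : i ∈ I)
    -- finite-dimensional laws of the chain, started in the Dirac distribution `δ_i`
    (hlaw : ∀ (n : ℕ) (w : ℕ → Fin N),
      μ {ω | ∀ k ≤ n, y k ω = w k} =
        ENNReal.ofReal ((if w 0 = i then (1 : ℝ) else 0) *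
          ∏ k ∈ Finset.range n, P (w k) (w (k + 1))))
    -- the escape time from `I`
    (T : Ω → ℕ∞)
    (hT : ∀ ω, T ω = sInf {n : ℕ∞ | ∃ m : ℕ, n = (m : ℕ∞) ∧ 1 ≤ m ∧ y m ω ∉ I}) :
    μ {ω | T ω < ⊤} = 1 ∧
    ∫⁻ ω, ((T ω : ℕ∞) : ℝ≥0∞) ∂μ ≠ ⊤ ∧
    ∫⁻ ω, ((T ω : ℕ∞) : ℝ≥0∞) ∂μ =
      ENNReal.ofReal (((1 - Q)⁻¹ *ᵥ (fun _ => 1)) ⟨i, hi⟩) := by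
  have : Nonempty I := ⟨⟨i, hi⟩⟩
  have hQnonneg (a b : I) : 0 ≤ Q a b := hQ a b ▸ hPnonneg a b
  have hstay (n : ℕ) : {ω | (n : ℕ∞) < T ω} = {ω | ∀ k ≤ n, 1 ≤ k → y k ω ∈ I} := by
    ext ω
    simp [hT, ENat.natCast_lt_sInf_iff]
  have hmeas (n : ℕ) : MeasurableSet {ω | (n : ℕ∞) < T ω} := hstay n ▸ measurableSet_stay hy I n
  have hsum := Pi.hasSum.1 (hasSum_pow_mulVec_of_spectrum_lt_one hspec 1) ⟨i, hi⟩
  have hint : ∫⁻ ω, (T ω : ℝ≥0∞) ∂μ = ENNReal.ofReal (((1 - Q)⁻¹ *ᵥ 1) ⟨i, hi⟩) := by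
    simp_rw [lintegral_toENNReal_eq_tsum_measure_lt μ hmeas, hstay,
      HasMarkovLaw.measure_stay_eq_pow_mulVec_one hlaw hy hPnonneg hQ hi]
    rw [← ofReal_tsum_of_nonneg (fun n => pow_mulVec_one_nonneg hQnonneg n _) hsum.summable,
      hsum.tsum_eq]
  have hT_meas := measurable_toENNReal_of_measurableSet_lt hmeas
  have hfin := ae_lt_top hT_meas (hint ▸ ofReal_ne_top)
  refine ⟨?_, hint ▸ ofReal_ne_top, hint⟩
  rw [ae_iff_measure_eq (measurableSet_lt hT_meas measurable_const).nullMeasurableSet,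
    measure_univ] at hfin
  simpa using hfin

/-- Let `(y n)` be a Markov chain on `{1,…,N}` with row-stochastic
transition matrix `P` and initial distribution `δ_i` for `i ∈ I`, and assume the spectral
radius of the principal submatrix `Q` is strictly smaller than 1 (all complex eigenvalues
have modulus `< 1`).  Then the chain leaves `I` almost surely, the expected escape time is
finite, and it equals `((Id - Q)⁻¹ 𝟙)_i`. -/
theorem markov_expected_escape_time_eq_inverse
    (N : ℕ) (hN : 0 < N)
    (P : Matrix (Fin N) (Fin N) ℝ)
    (hPnonneg : ∀ a b, 0 ≤ P a b)
    (hProw : ∀ a, ∑ b, P a b = 1)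
    (I : Finset (Fin N))
    (Q : Matrix {x // x ∈ I} {x // x ∈ I} ℝ)
    (hQ : ∀ a b : {x // x ∈ I}, Q a b = P a b)
    -- the spectral radius of `Q` is strictly smaller than 1
    (hspec : ∀ z : ℂ, z ∈ spectrum ℂ (Q.map (algebraMap ℝ ℂ)) → ‖z‖ < 1)
    (Ω : Type*) [MeasurableSpace Ω] (μ : Measure Ω) [IsProbabilityMeasure μ]
    (y : ℕ → Ω → Fin N) (hy : ∀ n, Measurable (y n))
    (i : Fin N) (hi : i ∈ I)
    -- finite-dimensional laws of the chain, started in the Dirac distribution `δ_i`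
    (hlaw : ∀ (n : ℕ) (w : ℕ → Fin N),
      μ {ω | ∀ k ≤ n, y k ω = w k} =
        ENNReal.ofReal ((if w 0 = i then (1 : ℝ) else 0) *
          ∏ k ∈ Finset.range n, P (w k) (w (k + 1))))
    -- the escape time from `I`
    (T : Ω → ℕ∞)
    (hT : ∀ ω, T ω = sInf {n : ℕ∞ | ∃ m : ℕ, n = (m : ℕ∞) ∧ 1 ≤ m ∧ y m ω ∉ I}) :
    μ {ω | T ω < ⊤} = 1 ∧
    ∫⁻ ω, ((T ω : ℕ∞) : ℝ≥0∞) ∂μ ≠ ⊤ ∧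
    ∫⁻ ω, ((T ω : ℕ∞) : ℝ≥0∞) ∂μ =
      ENNReal.ofReal (((1 - Q)⁻¹ *ᵥ (fun _ => 1)) ⟨i, hi⟩) :=
  markov_expected_escape_time_eq_inverse_general N P hPnonneg I Q hQ hspec Ω μ y hy i hi hlaw T hT
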